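/- (First Korn inequality.) For every smooth compactly supported vector field v = (v₁,v₂) ∈ C_c^∞(ℝ², ℝ²), 2 ∫_{ℝ²} |ε(v)(x)|² dx ≥ ∫_{ℝ²} |∇v(x)|² dx. -/

import Mathlib

/-!
Pointwise, `2|ε(v)|² - |∇v|² = (div v)² + 2 (∂₂v₁ ∂₁v₂ - ∂₁v₁ ∂₂v₂)`. Integrating by parts twice
(once in each variable) and using the symmetry of second derivatives shows that the last term
has integral zero, so `2 ∫ |ε(v)|² - ∫ |∇v|² = ∫ (div v)² ≥ 0`.
-/

open MeasureTheory

/-- First partial derivative `∂₁ f` of `f : ℝ² → ℝ`. -/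
noncomputable def pd1 (f : ℝ × ℝ → ℝ) : ℝ × ℝ → ℝ := fun x => fderiv ℝ f x (1, 0)

/-- Second partial derivative `∂₂ f` of `f : ℝ² → ℝ`. -/
noncomputable def pd2 (f : ℝ × ℝ → ℝ) : ℝ × ℝ → ℝ := fun x => fderiv ℝ f x (0, 1)

/-- Squared Frobenius norm of the symmetric gradient (linearized strain):
`|ε(v)|² = |∂₁v₁|² + |∂₂v₂|² + (1/2)|∂₂v₁ + ∂₁v₂|²`. -/
noncomputable def epsSq (v1 v2 : ℝ × ℝ → ℝ) (x : ℝ × ℝ) : ℝ :=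
  (pd1 v1 x) ^ 2 + (pd2 v2 x) ^ 2 + (1 / 2) * (pd2 v1 x + pd1 v2 x) ^ 2

/-- Squared gradient norm `|∇v|² = Σ_{i,j} |∂_j v_i|²`. -/
noncomputable def gradSq (v1 v2 : ℝ × ℝ → ℝ) (x : ℝ × ℝ) : ℝ :=
  (pd1 v1 x) ^ 2 + (pd2 v1 x) ^ 2 + (pd1 v2 x) ^ 2 + (pd2 v2 x) ^ 2

section Calculus

variable {E : Type*} [NormedAddCommGroup E] [NormedSpace ℝ E] {f g : E → ℝ}

theorem ContDiff.continuous_fderiv_apply_const (hf : ContDiff ℝ 1 f) (v : E) :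
    Continuous fun x => fderiv ℝ f x v :=
  (hf.continuous_fderiv one_ne_zero).clm_apply continuous_const

theorem ContDiff.fderiv_apply_const (hf : ContDiff ℝ 2 f) (v : E) :
    ContDiff ℝ 1 fun x => fderiv ℝ f x v :=
  (hf.fderiv_right (m := 1) le_rfl).clm_apply contDiff_const

theorem fderiv_fderiv_apply_comm (hf : ContDiff ℝ 2 f) (x v w : E) :
    fderiv ℝ (fun y => fderiv ℝ f y v) x w = fderiv ℝ (fun y => fderiv ℝ f y w) x v := by
  have hd : DifferentiableAt ℝ (fderiv ℝ f) x :=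
    (hf.fderiv_right (m := 1) le_rfl).differentiable one_ne_zero x
  simp only [fderiv_clm_apply hd (differentiableAt_const _), fderiv_fun_const, Pi.zero_apply,
    ContinuousLinearMap.comp_zero, zero_add, ContinuousLinearMap.flip_apply]
  exact (hf.contDiffAt.isSymmSndFDerivAt (by simp)).eq w v

variable [MeasurableSpace E] [BorelSpace E] {μ : Measure E}

theorem integrable_of_eq_zero_of_fderiv_eq_zero [IsFiniteMeasureOnCompacts μ]
    {u w : E → ℝ} (hg : Continuous g) (hcu : HasCompactSupport u) (hcw : HasCompactSupport w)
    (h : ∀ x, fderiv ℝ u x = 0 → fderiv ℝ w x = 0 → g x = 0) : Integrable g μ :=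
  hg.integrable_of_hasCompactSupport <| HasCompactSupport.intro (hcu.union hcw) fun x hx =>
    h x (fderiv_of_notMem_tsupport ℝ fun h => hx (.inl h))
      (fderiv_of_notMem_tsupport ℝ fun h => hx (.inr h))

variable [FiniteDimensional ℝ E] [μ.IsAddHaarMeasure]

theorem integral_mul_fderiv_eq_neg_fderiv_mul_of_hasCompactSupport (hf : ContDiff ℝ 1 f)
    (hg : ContDiff ℝ 1 g) (hcf : HasCompactSupport f) (v : E) :
    ∫ x, f x * fderiv ℝ g x v ∂μ = -∫ x, fderiv ℝ f x v * g x ∂μ :=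
  integral_mul_fderiv_eq_neg_fderiv_mul_of_integrable
    ((hf.continuous_fderiv_apply_const v).mul hg.continuous |>.integrable_of_hasCompactSupport
      (hcf.fderiv_apply ℝ v).mul_right)
    ((hf.continuous.mul (hg.continuous_fderiv_apply_const v)).integrable_of_hasCompactSupport
      hcf.mul_right)
    ((hf.continuous.mul hg.continuous).integrable_of_hasCompactSupport hcf.mul_right)
    (fun x _ => (hf.differentiable one_ne_zero) x) (fun x _ => (hg.differentiable one_ne_zero) x)

theorem integral_fderiv_mul_fderiv_comm (hf : ContDiff ℝ 2 f) (hg : ContDiff ℝ 1 g)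
    (hcf : HasCompactSupport f) (v w : E) :
    ∫ x, fderiv ℝ f x v * fderiv ℝ g x w ∂μ = ∫ x, fderiv ℝ f x w * fderiv ℝ g x v ∂μ := by
  rw [integral_mul_fderiv_eq_neg_fderiv_mul_of_hasCompactSupport (hf.fderiv_apply_const v) hg
      (hcf.fderiv_apply ℝ v),
    integral_mul_fderiv_eq_neg_fderiv_mul_of_hasCompactSupport (hf.fderiv_apply_const w) hg
      (hcf.fderiv_apply ℝ w)]
  simp only [fderiv_fderiv_apply_comm hf _ v w]

end Calculus

section Korn

variable {v1 v2 : ℝ × ℝ → ℝ}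

theorem two_mul_epsSq (x : ℝ × ℝ) :
    2 * epsSq v1 v2 x = gradSq v1 v2 x + (pd1 v1 x + pd2 v2 x) ^ 2
      + 2 * (pd2 v1 x * pd1 v2 x - pd1 v1 x * pd2 v2 x) := by
  simp only [epsSq, gradSq]
  ring

theorem integral_pd2_mul_pd1 (h1 : ContDiff ℝ 2 v1) (h2 : ContDiff ℝ 1 v2)
    (hc1 : HasCompactSupport v1) :
    ∫ x, pd2 v1 x * pd1 v2 x = ∫ x, pd1 v1 x * pd2 v2 x :=
  integral_fderiv_mul_fderiv_comm h1 h2 hc1 _ _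

theorem two_mul_integral_epsSq (h1 : ContDiff ℝ 2 v1) (h2 : ContDiff ℝ 2 v2)
    (hc1 : HasCompactSupport v1) (hc2 : HasCompactSupport v2) :
    2 * ∫ x, epsSq v1 v2 x = (∫ x, gradSq v1 v2 x) + ∫ x, (pd1 v1 x + pd2 v2 x) ^ 2 := by
  have hint {g : ℝ × ℝ → ℝ} (hg : Continuous g)
      (h : ∀ x, fderiv ℝ v1 x = 0 → fderiv ℝ v2 x = 0 → g x = 0) : Integrable g :=
    integrable_of_eq_zero_of_fderiv_eq_zero hg hc1 hc2 h
  have c11 : Continuous (pd1 v1) := h1.of_le one_le_two |>.continuous_fderiv_apply_const _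
  have c21 : Continuous (pd2 v1) := h1.of_le one_le_two |>.continuous_fderiv_apply_const _
  have c12 : Continuous (pd1 v2) := h2.of_le one_le_two |>.continuous_fderiv_apply_const _
  have c22 : Continuous (pd2 v2) := h2.of_le one_le_two |>.continuous_fderiv_apply_const _
  have igrad : Integrable (gradSq v1 v2) :=
    hint (by unfold gradSq; fun_prop) fun x hx1 hx2 => by simp [gradSq, pd1, pd2, hx1, hx2]
  have idiv : Integrable fun x => (pd1 v1 x + pd2 v2 x) ^ 2 :=
    hint (by fun_prop) fun x hx1 hx2 => by simp [pd1, pd2, hx1, hx2]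
  have i2112 : Integrable fun x => pd2 v1 x * pd1 v2 x :=
    hint (by fun_prop) fun x hx1 hx2 => by simp [pd1, pd2, hx1, hx2]
  have i1122 : Integrable fun x => pd1 v1 x * pd2 v2 x :=
    hint (by fun_prop) fun x hx1 hx2 => by simp [pd1, pd2, hx1, hx2]
  rw [← integral_const_mul]
  simp_rw [two_mul_epsSq]
  rw [integral_add ?_ ?_, integral_add igrad idiv, integral_const_mul, integral_sub i2112 i1122,
    integral_pd2_mul_pd1 h1 (h2.of_le one_le_two) hc1, sub_self, mul_zero, add_zero]
  · exact igrad.add idiv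
  · exact (i2112.sub i1122).const_mul 2

end Korn

/-- First Korn inequality: for every smooth compactly supported vector field
`v = (v₁,v₂) ∈ C_c^∞(ℝ², ℝ²)`, `2 ∫_{ℝ²} |ε(v)|² dx ≥ ∫_{ℝ²} |∇v|² dx`. -/
theorem first_korn_inequality (v1 v2 : ℝ × ℝ → ℝ)
    (h1 : ContDiff ℝ (⊤ : ℕ∞) v1) (h2 : ContDiff ℝ (⊤ : ℕ∞) v2)
    (hc1 : HasCompactSupport v1) (hc2 : HasCompactSupport v2) :
    2 * ∫ x : ℝ × ℝ, epsSq v1 v2 x ≥ ∫ x : ℝ × ℝ, gradSq v1 v2 x := by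
  have smooth_le : (2 : WithTop ℕ∞) ≤ (⊤ : ℕ∞) := WithTop.coe_le_coe.mpr le_top
  rw [two_mul_integral_epsSq (h1.of_le smooth_le) (h2.of_le smooth_le) hc1 hc2, ge_iff_le]
  exact le_add_of_nonneg_right (integral_nonneg fun _ => sq_nonneg _)
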